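/- Let ψ ∈ ℂ⁸ be the three-qubit state with computational-basis coordinates (ordered |000⟩,|001⟩,|010⟩,|011⟩,|100⟩,|101⟩,|110⟩,|111⟩) equal to (1/2)·(1, (1−i)/2, (1−i)/2, (1+i)/2, (1−i)/2, (1+i)/2, (1+i)/2, 0). Then every single-qubit reduced density matrix of ψ equals (1/2)(I + (1/4)(X+Y+Z)); in particular, each single-qubit Bloch vector equals (1/4, 1/4, 1/4), which is (√3/4)·m₁ and has Euclidean norm √3/4. -/

import Mathlib

open Matrix Complex

noncomputable section

def X2 : Matrix (Fin 2) (Fin 2) ℂ := !![0, 1; 1, 0]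
def Y2 : Matrix (Fin 2) (Fin 2) ℂ := !![0, -Complex.I; Complex.I, 0]
def Z2 : Matrix (Fin 2) (Fin 2) ℂ := !![1, 0; 0, -1]

/-- Three-qubit states, indexed by bit strings (`f 0` is the most significant bit). -/
abbrev V3 := (Fin 3 → Fin 2) → ℂ

/-- Binary index `|z₁z₂z₃⟩ ↦ 4z₁ + 2z₂ + z₃`. -/
def idx3 (f : Fin 3 → Fin 2) : Fin 8 :=
  ⟨4 * (f 0).val + 2 * (f 1).val + (f 2).val, by
    have := (f 0).isLt; have := (f 1).isLt; have := (f 2).isLt; omega⟩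

/-- The three-qubit state `(1/2)(1, (1−i)/2, (1−i)/2, (1+i)/2, (1−i)/2, (1+i)/2, (1+i)/2, 0)`. -/
def ψ311 : V3 := fun f => (1 / 2 : ℂ) *
  (![1, (1 - Complex.I) / 2, (1 - Complex.I) / 2, (1 + Complex.I) / 2,
     (1 - Complex.I) / 2, (1 + Complex.I) / 2, (1 + Complex.I) / 2, 0] : Fin 8 → ℂ) (idx3 f)

/-- Reduced density matrix of qubit `j` (partial trace over the other two qubits). -/
def rdm3 (ψ : V3) (j : Fin 3) : Matrix (Fin 2) (Fin 2) ℂ :=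
  fun a b => ∑ f : Fin 3 → Fin 2,
    if f j = a then ψ f * star (ψ (Function.update f j b)) else 0


/-!
The amplitudes of `ψ311` depend only on the Hamming weight of the basis string. For such a
state with weight amplitudes `c₀, …, c₃`, the entry `ρ_ab` of any marginal collects, for each
number `k` of ones among the two traced-out qubits, the `(2 choose k)` strings contributing
`c_{k+a} c̄_{k+b}`. Here `|c₀|² = 1/4`, `|c₁|² = |c₂|² = 1/8`, `c₃ = 0` and
`c₀c̄₁ + 2c₁c̄₂ = (1 - i)/8`, which is the marginal `½(I + ¼(X + Y + Z))`.
-/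

lemma hammingNorm_eq_sum_val {ι : Type*} [Fintype ι] (f : ι → Fin 2) :
    hammingNorm f = ∑ i, (f i : ℕ) := by
  rw [hammingNorm, Finset.card_filter]
  congr! 1 with i
  rcases Fin.exists_fin_two.mp ⟨f i, rfl⟩ with h | h <;> simp [h]

lemma exists_eq_vec3 {α : Type*} (f : Fin 3 → α) : ∃ x y z, f = ![x, y, z] :=
  ⟨f 0, f 1, f 2, by ext i; fin_cases i <;> rfl⟩

lemma sum_fun_fin_three {M : Type*} [AddCommMonoid M] (g : (Fin 3 → Fin 2) → M) :
    ∑ f, g f = ∑ x : Fin 2, ∑ y : Fin 2, ∑ z : Fin 2, g ![x, y, z] := by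
  rw [← Fintype.sum_prod_type', ← Fintype.sum_prod_type']
  exact (Fintype.sum_bijective (fun p : Fin 2 × Fin 2 × Fin 2 => ![p.1, p.2.1, p.2.2])
    (by decide) _ g fun _ => rfl).symm

lemma rdm3_apply_of_hammingNorm (c : ℕ → ℂ) (j : Fin 3) (a b : Fin 2) :
    rdm3 (fun f => c (hammingNorm f)) j a b =
      ∑ k ∈ Finset.range 3, (Nat.choose 2 k : ℂ) * c (k + a) * star (c (k + b)) := by
  rw [rdm3, sum_fun_fin_three]
  fin_cases j <;> fin_cases a <;> fin_cases b <;>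
    simp [Fin.sum_univ_two, Fin.sum_univ_three, Finset.sum_range_succ, hammingNorm_eq_sum_val,
      Function.update_apply] <;> ring

def blochVector (ρ : Matrix (Fin 2) (Fin 2) ℂ) : ℂ × ℂ × ℂ :=
  ((ρ * X2).trace, (ρ * Y2).trace, (ρ * Z2).trace)

lemma blochVector_half_smul_one_add (a b c : ℂ) :
    blochVector ((1 / 2 : ℂ) • (1 + (a • X2 + b • Y2 + c • Z2))) = (a, b, c) := by
  simp [blochVector, Matrix.trace, Matrix.mul_apply, Fin.sum_univ_two, X2, Y2, Z2,
    Matrix.one_apply]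
  exact ⟨by ring, by linear_combination (-b) * I_sq, by ring⟩

def ejmFiducialAmp : ℕ → ℂ
  | 0 => 1 / 2
  | 1 => (1 - I) / 4
  | 2 => (1 + I) / 4
  | _ => 0

lemma ψ311_eq_ejmFiducialAmp_hammingNorm : ψ311 = fun f => ejmFiducialAmp (hammingNorm f) := by
  funext f
  obtain ⟨x, y, z, rfl⟩ := exists_eq_vec3 f
  fin_cases x <;> fin_cases y <;> fin_cases z <;>
    simp [ψ311, idx3, ejmFiducialAmp, hammingNorm_eq_sum_val, Fin.sum_univ_three] <;> ring

lemma rdm3_ψ311 (j : Fin 3) :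
    rdm3 ψ311 j = (1 / 2 : ℂ) • ((1 : Matrix (Fin 2) (Fin 2) ℂ) + (1 / 4 : ℂ) • (X2 + Y2 + Z2)) := by
  ext a b
  rw [ψ311_eq_ejmFiducialAmp_hammingNorm, rdm3_apply_of_hammingNorm]
  fin_cases a <;> fin_cases b <;>
    simp [Finset.sum_range_succ, ejmFiducialAmp, X2, Y2, Z2, map_ofNat] <;>
    ring_nf <;> rw [I_sq] <;> ring

lemma sqrt_three_div_four_mul_one_div_sqrt_three : √3 / 4 * (1 / √3) = 1 / 4 := by
  field_simp

/-- Every single-qubit reduced density matrix of `ψ311` equals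
`½(I + ¼(X+Y+Z))`; in particular each single-qubit Bloch vector is `(1/4, 1/4, 1/4)`,
which is `(√3/4)·m₁` and has Euclidean norm `√3/4`. -/
theorem three_qubit_EJM_fiducial_marginals :
    (∀ j : Fin 3, rdm3 ψ311 j =
      (1 / 2 : ℂ) • ((1 : Matrix (Fin 2) (Fin 2) ℂ) + (1 / 4 : ℂ) • (X2 + Y2 + Z2))) ∧
    (∀ j : Fin 3,
      ((rdm3 ψ311 j * X2).trace, (rdm3 ψ311 j * Y2).trace, (rdm3 ψ311 j * Z2).trace) =
        ((1 / 4 : ℂ), (1 / 4 : ℂ), (1 / 4 : ℂ))) ∧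
    (![(1 / 4 : ℝ), 1 / 4, 1 / 4] =
      (Real.sqrt 3 / 4) • fun _ : Fin 3 => 1 / Real.sqrt 3) ∧
    Real.sqrt ((1 / 4) ^ 2 + (1 / 4) ^ 2 + (1 / 4) ^ 2) = Real.sqrt 3 / 4 := by
  refine ⟨rdm3_ψ311, fun j => ?_, ?_, ?_⟩
  · rw [← blochVector, rdm3_ψ311, smul_add (1 / 4 : ℂ) (X2 + Y2), smul_add (1 / 4 : ℂ) X2,
      blochVector_half_smul_one_add]
  · ext i
    fin_cases i <;> simpa using sqrt_three_div_four_mul_one_div_sqrt_three.symm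
  · rw [Real.sqrt_eq_iff_mul_self_eq (by positivity) (by positivity), div_mul_div_comm,
      Real.mul_self_sqrt (by norm_num)]
    norm_num

end
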